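/- arXiv:1808.03526 — 2 statements merged into one kernel-verified Lean document; each statement's English description precedes it below -/
import Mathlib

section
/- Let d ≥ 1, let u > 1 divide d+1, and let d+1 divide n. Then the u-contraction of the d-th power of the n-cycle equals the ((d+1)/u)-th power of the (n/u)-cycle. That is, for groups a_k = {uk+1, ..., u(k+1)} for k ∈ [0, n/u − 1], groups a_k and a_l (k ≠ l) contain vertices i ∈ a_k, j ∈ a_l at cyclic distance at most d in C_n if and only if k and l are at cyclic distance at most (d+1)/u in C_{n/u}. -/
/-- Cyclic distance between `i` and `j` on the `n`-cycle. -/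
def cycDist (n i j : ℕ) : ℕ := min ((i + n - j) % n) ((j + n - i) % n)

lemma cycDist_comm (n a b : ℕ) : cycDist n a b = cycDist n b a := by
  unfold cycDist; exact min_comm _ _

lemma cycDist_eq' (n a D : ℕ) (h1 : 0 < D) (h2 : D < n) :
    cycDist n a (a + D) = min D (n - D) := by
  unfold cycDist
  have e1 : a + n - (a + D) = n - D := by omega
  have e2 : a + D + n - a = n + D := by omega
  rw [e1, e2, Nat.add_mod_left, Nat.mod_eq_of_lt (by omega : n - D < n),
    Nat.mod_eq_of_lt h2, min_comm]

lemma mul_helper (u a b : ℕ) (hu : 2 ≤ u) (h : u*a + 2 ≤ u*b + u) : a ≤ b := by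
  by_contra h'
  push_neg at h'
  have h2 : u*(b+1) ≤ u*a := Nat.mul_le_mul le_rfl h'
  have h3 : u*(b+1) = u*b + u := by ring
  linarith

lemma aux (d u n e m k c r : ℕ) (hu : 2 ≤ u) (he : d + 1 = u * e)
    (hn : n = u * m) (hm : m = k + c + r) (hc : 1 ≤ c) (hr : 1 ≤ r) :
    (∃ i ∈ Finset.Icc (u * k + 1) (u * (k + 1)),
      ∃ j ∈ Finset.Icc (u * (k + c) + 1) (u * (k + c + 1)), cycDist n i j ≤ d) ↔
    min c (k + r) ≤ e := by
  have hkc : u * (k + c) = u*k + u*c := by ring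
  have hkc1 : u * (k + c + 1) = u*k + u*c + u := by ring
  have hk1 : u * (k+1) = u*k + u := by ring
  have hn2 : n = u*k + u*c + u*r := by rw [hn, hm]; ring
  have hur : u ≤ u * r := by
    calc u = u * 1 := (mul_one u).symm
    _ ≤ u * r := Nat.mul_le_mul le_rfl hr
  have huc : u ≤ u * c := by
    calc u = u * 1 := (mul_one u).symm
    _ ≤ u * c := Nat.mul_le_mul le_rfl hc
  constructor
  · rintro ⟨i, hi, j, hj, hdist⟩
    rw [Finset.mem_Icc, hk1] at hi
    rw [Finset.mem_Icc, hkc, hkc1] at hj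
    have hij : i < j := by
      have h1 : i ≤ u*k + u := hi.2
      have h2 : u*k + u*c + 1 ≤ j := hj.1
      linarith
    obtain ⟨D, rfl⟩ : ∃ D, j = i + D := ⟨j - i, by omega⟩
    have hD0 : 0 < D := by omega
    have hi1 : 1 ≤ i := by have := hi.1; linarith [Nat.zero_le (u*k)]
    have hiDn : i + D ≤ n := by
      have := hj.2; linarith
    have hDn : D < n := by omega
    rw [cycDist_eq' n i D hD0 hDn] at hdist
    rcases min_le_iff.mp hdist with h1 | h2
    · have a1 : u*k + u*c + 1 ≤ i + D := hj.1
      have a2 : i ≤ u*k + u := hi.2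
      have key : u*c + 2 ≤ u*e + u := by linarith
      exact le_trans (min_le_left _ _) (mul_helper u c e hu key)
    · have hnle : n ≤ D + d := by omega
      have a1 : u*k + 1 ≤ i := hi.1
      have a2 : i + D ≤ u*k + u*c + u := hj.2
      have hkr : u*(k+r) = u*k + u*r := by ring
      have key : u*(k+r) + 2 ≤ u*e + u := by linarith
      exact le_trans (min_le_right _ _) (mul_helper u (k+r) e hu key)
  · intro hmin
    rcases le_or_gt c e with hce | hec
    · obtain ⟨c', rfl⟩ : ∃ c', c = c' + 1 := ⟨c - 1, by omega⟩
      have b1 : u*(k+(c'+1)) = u*k + u*c' + u := by ring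
      have b2 : u*(k+(c'+1)+1) = u*k + u*c' + u + u := by ring
      refine ⟨u*k + u, ?_, u*k + u + (u*c' + 1), ?_, ?_⟩
      · rw [Finset.mem_Icc, hk1]
        constructor <;> linarith
      · rw [Finset.mem_Icc, b1, b2]
        constructor <;> linarith
      · have hn3 : n = u*k + u*c' + u + u*r := by rw [hn2]; ring
        have hDn : u*c' + 1 < n := by linarith [Nat.zero_le (u*k)]
        rw [cycDist_eq' n _ (u*c'+1) (by omega) hDn]
        have hle : u*(c'+1) ≤ u*e := Nat.mul_le_mul le_rfl hce
        have h3 : u*(c'+1) = u*c' + u := by ring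
        have : u*c' + 1 ≤ d := by linarith
        exact le_trans (min_le_left _ _) this
    · have hkr : k + r ≤ e := by
        rcases min_le_iff.mp hmin with h | h
        · omega
        · exact h
      obtain ⟨v, rfl⟩ : ∃ v, u = v + 1 := ⟨u - 1, by omega⟩
      have hv1 : 1 ≤ v := by omega
      have b1 : (v+1)*(k+c) = (v+1)*k + (v+1)*c := by ring
      have b2 : (v+1)*(k+c+1) = (v+1)*k + (v+1)*c + (v+1) := by ring
      have b3 : (v+1)*(k+1) = (v+1)*k + (v+1) := by ring
      have hvr : v + 1 ≤ (v+1)*r := by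
        calc v + 1 = (v+1) * 1 := (mul_one _).symm
        _ ≤ (v+1)*r := Nat.mul_le_mul le_rfl hr
      have hkre : (v+1)*(k+r) ≤ (v+1)*e := Nat.mul_le_mul le_rfl hkr
      have hkre' : (v+1)*(k+r) = (v+1)*k + (v+1)*r := by ring
      refine ⟨(v+1)*k + 1, ?_, (v+1)*k + 1 + ((v+1)*c + v), ?_, ?_⟩
      · rw [Finset.mem_Icc, b3]
        constructor <;> linarith
      · rw [Finset.mem_Icc, b1, b2]
        constructor <;> linarith
      · have hD0 : 0 < (v+1)*c + v := by linarith
        have hDn : (v+1)*c + v < n := by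
          rw [hn2]; linarith [Nat.zero_le ((v+1)*k)]
        rw [cycDist_eq' n _ ((v+1)*c + v) hD0 hDn]
        have h5 : n ≤ ((v+1)*c + v) + d := by
          rw [hn2]; linarith
        have : n - ((v+1)*c + v) ≤ d := by omega
        exact le_trans (min_le_right _ _) this

lemma aux2 (d u n e m k l : ℕ) (hu : 2 ≤ u) (he : d + 1 = u * e)
    (hn : n = u * m) (hkl : k < l) (hl : l < m) :
    (∃ i ∈ Finset.Icc (u * k + 1) (u * (k + 1)),
      ∃ j ∈ Finset.Icc (u * l + 1) (u * (l + 1)), cycDist n i j ≤ d) ↔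
    cycDist m k l ≤ e := by
  obtain ⟨c, rfl⟩ : ∃ c, l = k + (c + 1) := ⟨l - k - 1, by omega⟩
  obtain ⟨r, hm⟩ : ∃ r, m = k + (c + 1) + (r + 1) := ⟨m - (k + c + 1) - 1, by omega⟩
  have hcyc : cycDist m k (k + (c+1)) = min (c+1) (k + (r+1)) := by
    unfold cycDist
    have e1 : k + m - (k + (c+1)) = k + (r+1) := by omega
    have e2 : k + (c+1) + m - k = m + (c+1) := by omega
    rw [e1, e2, Nat.add_mod_left, Nat.mod_eq_of_lt (by omega : k + (r+1) < m),
      Nat.mod_eq_of_lt (by omega : c + 1 < m), min_comm]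
  rw [hcyc]
  exact aux d u n e m k (c+1) (r+1) hu he hn hm (by omega) (by omega)

/-- Cycle contraction: for `u ∣ d+1` and `d+1 ∣ n`, the `u`-contraction of `C_n^d`
(on vertices `1,…,n`, groups `a_k = {uk+1,…,u(k+1)}`) equals `C_{n/u}^{(d+1)/u}`. -/
theorem cycle_contraction (d u n : ℕ) (hd : 1 ≤ d) (hu : 1 < u)
    (hud : u ∣ d + 1) (hdn : (d + 1) ∣ n) (hn : 0 < n)
    (k l : ℕ) (hk : k < n / u) (hl : l < n / u) (hkl : k ≠ l) :
    (∃ i ∈ Finset.Icc (u * k + 1) (u * (k + 1)),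
      ∃ j ∈ Finset.Icc (u * l + 1) (u * (l + 1)), cycDist n i j ≤ d) ↔
    cycDist (n / u) k l ≤ (d + 1) / u := by
  have hu2 : 2 ≤ u := hu
  have hun : u ∣ n := hud.trans hdn
  have hn' : n = u * (n / u) := (Nat.mul_div_cancel' hun).symm
  have he : d + 1 = u * ((d + 1) / u) := (Nat.mul_div_cancel' hud).symm
  rcases lt_trichotomy k l with h | h | h
  · exact aux2 d u n ((d+1)/u) (n/u) k l hu2 he hn' h hl
  · exact absurd h hkl
  · rw [cycDist_comm, ← aux2 d u n ((d+1)/u) (n/u) l k hu2 he hn' h hk]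
    constructor
    · rintro ⟨i, hi, j, hj, hd'⟩
      exact ⟨j, hj, i, hi, by rwa [cycDist_comm]⟩
    · rintro ⟨i, hi, j, hj, hd'⟩
      exact ⟨j, hj, i, hi, by rwa [cycDist_comm]⟩
end

section
/- If there exists an (α, d)-cover of C_n^d, then the batching algorithm is 1/α-competitive under random arrival order: the expected offline maximum matching value (1/n!)Σ_{σ∈S_n} m(P_n^d(σ) * G) is at most α times the expected batching value (1/n!)Σ_{σ∈S_n} m(B_n^d(σ) * G), for any weighted graph G on [n]. -/
attribute [local instance] Classical.propDecidable

/-- A matching: a finite set of edges (ordered pairs) that are pairwise vertex-disjoint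
and have distinct endpoints. -/
def IsMatching {V : Type*} (M : Finset (V × V)) : Prop :=
  (∀ e ∈ M, e.1 ≠ e.2) ∧
    ∀ e ∈ M, ∀ f ∈ M, e ≠ f → e.1 ≠ f.1 ∧ e.1 ≠ f.2 ∧ e.2 ≠ f.1 ∧ e.2 ≠ f.2

/-- The maximum weight of a matching in the weighted graph on `Fin n` with
edge weights `v`. -/
noncomputable def maxMatch {n : ℕ} (v : Fin n → Fin n → ℝ) : ℝ :=
  ((Finset.univ : Finset (Fin n × Fin n)).powerset.filter IsMatching).sup'
    ⟨∅, by simp [IsMatching]⟩ (fun M => ∑ e ∈ M, v e.1 e.2)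

/-- Vertices `i` and `j` fall in the same batch of size `d+1` under arrival order `σ`. -/
def SameBatch {n : ℕ} (d : ℕ) (σ : Equiv.Perm (Fin n)) (i j : Fin n) : Prop :=
  (σ i : ℕ) / (d + 1) = (σ j : ℕ) / (d + 1)

lemma le_maxMatch {n : ℕ} (v : Fin n → Fin n → ℝ) {M : Finset (Fin n × Fin n)}
    (hM : IsMatching M) : ∑ e ∈ M, v e.1 e.2 ≤ maxMatch v := by
  unfold maxMatch
  exact Finset.le_sup' (f := fun (N : Finset (Fin n × Fin n)) => ∑ e ∈ N, v e.1 e.2)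
    (b := M) (by simp [Finset.mem_filter, Finset.mem_powerset, hM])

lemma maxMatch_le {n : ℕ} {v : Fin n → Fin n → ℝ} {c : ℝ}
    (h : ∀ M : Finset (Fin n × Fin n), IsMatching M → ∑ e ∈ M, v e.1 e.2 ≤ c) :
    maxMatch v ≤ c := by
  apply Finset.sup'_le
  intro M hM
  exact h M (Finset.mem_filter.mp hM).2

lemma cycDist_le {n a b : ℕ} (ha : a < n) (hb : b < n) :
    cycDist n a b ≤ max a b - min a b := by
  unfold cycDist
  rcases le_total b a with h | h
  · have h1 : (a + n - b) % n = a - b := by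
      have : a + n - b = (a - b) + n := by omega
      rw [this, Nat.add_mod_right, Nat.mod_eq_of_lt (by omega)]
    calc min ((a + n - b) % n) ((b + n - a) % n) ≤ (a + n - b) % n := min_le_left _ _
      _ = a - b := h1
      _ = max a b - min a b := by omega
  · have h1 : (b + n - a) % n = b - a := by
      have : b + n - a = (b - a) + n := by omega
      rw [this, Nat.add_mod_right, Nat.mod_eq_of_lt (by omega)]
    calc min ((a + n - b) % n) ((b + n - a) % n) ≤ (b + n - a) % n := min_le_right _ _
      _ = b - a := h1
      _ = max a b - min a b := by omega

/-- If there is an `(α,d)`-cover of `C_n^d`, then Batching is `1/α`-competitive under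
a uniformly random arrival order: the expected offline value
`(1/n!) Σ_σ m(P_n^d(σ) * G)` is at most `α` times the expected batching value
`(1/n!) Σ_σ m(B_n^d(σ) * G)`. -/
theorem batching_competitive {n d K : ℕ}
    (G : Fin n → Fin n → ℝ) (hsymm : ∀ i j, G i j = G j i) (hnn : ∀ i j, 0 ≤ G i j)
    (σs : Fin K → Equiv.Perm (Fin n)) (lam : Fin K → ℝ) (hlam : ∀ k, 0 ≤ lam k)
    (α : ℝ) (hα : ∑ k, lam k = α)
    (hcover : ∀ i j : Fin n, i ≠ j → cycDist n i j ≤ d →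
      1 ≤ ∑ k ∈ Finset.univ.filter (fun k => SameBatch d (σs k) i j), lam k) :
    ((n.factorial : ℝ))⁻¹ * ∑ σ : Equiv.Perm (Fin n),
        maxMatch (fun i j =>
          (if i ≠ j ∧ max (σ i : ℕ) (σ j : ℕ) - min (σ i : ℕ) (σ j : ℕ) ≤ d
            then (1 : ℝ) else 0) * G i j) ≤
      α * (((n.factorial : ℝ))⁻¹ * ∑ σ : Equiv.Perm (Fin n),
        maxMatch (fun i j =>
          (if i ≠ j ∧ SameBatch d σ i j then (1 : ℝ) else 0) * G i j)) := by
  classical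
  set fB : Equiv.Perm (Fin n) → ℝ := fun σ =>
    maxMatch (fun i j => (if i ≠ j ∧ SameBatch d σ i j then (1 : ℝ) else 0) * G i j)
    with hfB
  -- key per-σ inequality
  have key : ∀ σ : Equiv.Perm (Fin n),
      maxMatch (fun i j =>
        (if i ≠ j ∧ max (σ i : ℕ) (σ j : ℕ) - min (σ i : ℕ) (σ j : ℕ) ≤ d
          then (1 : ℝ) else 0) * G i j) ≤ ∑ k, lam k * fB (σs k * σ) := by
    intro σ
    apply maxMatch_le
    intro M hM
    have hedge : ∀ e ∈ M,
        (if e.1 ≠ e.2 ∧ max (σ e.1 : ℕ) (σ e.2 : ℕ) - min (σ e.1 : ℕ) (σ e.2 : ℕ) ≤ d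
          then (1 : ℝ) else 0) * G e.1 e.2 ≤
        ∑ k, lam k * ((if e.1 ≠ e.2 ∧ SameBatch d (σs k * σ) e.1 e.2
          then (1 : ℝ) else 0) * G e.1 e.2) := by
      intro e _
      by_cases hc : e.1 ≠ e.2 ∧ max (σ e.1 : ℕ) (σ e.2 : ℕ) - min (σ e.1 : ℕ) (σ e.2 : ℕ) ≤ d
      · rw [if_pos hc, one_mul]
        obtain ⟨hne, hdist⟩ := hc
        have hne' : σ e.1 ≠ σ e.2 := fun h => hne (σ.injective h)
        have hcd : cycDist n (σ e.1) (σ e.2) ≤ d :=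
          le_trans (cycDist_le (σ e.1).isLt (σ e.2).isLt) hdist
        have h1 := hcover (σ e.1) (σ e.2) hne' hcd
        have hG := hnn e.1 e.2
        calc G e.1 e.2 = 1 * G e.1 e.2 := (one_mul _).symm
          _ ≤ (∑ k ∈ Finset.univ.filter
                (fun k => SameBatch d (σs k) (σ e.1) (σ e.2)), lam k) * G e.1 e.2 :=
              mul_le_mul_of_nonneg_right h1 hG
          _ = ∑ k ∈ Finset.univ.filter
                (fun k => SameBatch d (σs k) (σ e.1) (σ e.2)), lam k * G e.1 e.2 :=
              Finset.sum_mul _ _ _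
          _ = ∑ k, if SameBatch d (σs k) (σ e.1) (σ e.2) then lam k * G e.1 e.2 else 0 :=
              Finset.sum_filter _ _
          _ ≤ ∑ k, lam k * ((if e.1 ≠ e.2 ∧ SameBatch d (σs k * σ) e.1 e.2
                then (1 : ℝ) else 0) * G e.1 e.2) := by
              apply Finset.sum_le_sum
              intro k _
              have hsb : SameBatch d (σs k * σ) e.1 e.2 ↔
                  SameBatch d (σs k) (σ e.1) (σ e.2) := Iff.rfl
              by_cases hb : SameBatch d (σs k) (σ e.1) (σ e.2)
              · rw [if_pos hb, if_pos ⟨hne, hsb.mpr hb⟩, one_mul]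
              · rw [if_neg hb, if_neg (fun h => hb (hsb.mp h.2))]
                simp [hlam k, hnn e.1 e.2]
      · rw [if_neg hc, zero_mul]
        apply Finset.sum_nonneg
        intro k _
        apply mul_nonneg (hlam k)
        apply mul_nonneg _ (hnn e.1 e.2)
        split <;> norm_num
    calc ∑ e ∈ M,
          (if e.1 ≠ e.2 ∧ max (σ e.1 : ℕ) (σ e.2 : ℕ) - min (σ e.1 : ℕ) (σ e.2 : ℕ) ≤ d
            then (1 : ℝ) else 0) * G e.1 e.2
        ≤ ∑ e ∈ M, ∑ k, lam k * ((if e.1 ≠ e.2 ∧ SameBatch d (σs k * σ) e.1 e.2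
            then (1 : ℝ) else 0) * G e.1 e.2) := Finset.sum_le_sum hedge
      _ = ∑ k, lam k * ∑ e ∈ M, ((if e.1 ≠ e.2 ∧ SameBatch d (σs k * σ) e.1 e.2
            then (1 : ℝ) else 0) * G e.1 e.2) := by
          rw [Finset.sum_comm]
          exact Finset.sum_congr rfl fun k _ => (Finset.mul_sum _ _ _).symm
      _ ≤ ∑ k, lam k * fB (σs k * σ) := by
          apply Finset.sum_le_sum
          intro k _
          exact mul_le_mul_of_nonneg_left
            (le_maxMatch (fun i j => (if i ≠ j ∧ SameBatch d (σs k * σ) i j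
              then (1 : ℝ) else 0) * G i j) hM) (hlam k)
  have hsum : ∑ σ : Equiv.Perm (Fin n),
      maxMatch (fun i j =>
        (if i ≠ j ∧ max (σ i : ℕ) (σ j : ℕ) - min (σ i : ℕ) (σ j : ℕ) ≤ d
          then (1 : ℝ) else 0) * G i j) ≤
      α * ∑ σ : Equiv.Perm (Fin n), fB σ := by
    calc ∑ σ : Equiv.Perm (Fin n), maxMatch (fun i j =>
          (if i ≠ j ∧ max (σ i : ℕ) (σ j : ℕ) - min (σ i : ℕ) (σ j : ℕ) ≤ d
            then (1 : ℝ) else 0) * G i j)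
        ≤ ∑ σ : Equiv.Perm (Fin n), ∑ k, lam k * fB (σs k * σ) :=
          Finset.sum_le_sum fun σ _ => key σ
      _ = ∑ k, lam k * ∑ σ : Equiv.Perm (Fin n), fB (σs k * σ) := by
          rw [Finset.sum_comm]
          exact Finset.sum_congr rfl fun k _ => (Finset.mul_sum _ _ _).symm
      _ = ∑ k, lam k * ∑ σ : Equiv.Perm (Fin n), fB σ := by
          apply Finset.sum_congr rfl
          intro k _
          congr 1
          exact Equiv.sum_comp (Equiv.mulLeft (σs k)) fB
      _ = α * ∑ σ : Equiv.Perm (Fin n), fB σ := by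
          rw [← Finset.sum_mul, hα]
  have hinv : (0 : ℝ) ≤ ((n.factorial : ℝ))⁻¹ := by positivity
  calc ((n.factorial : ℝ))⁻¹ * ∑ σ : Equiv.Perm (Fin n),
        maxMatch (fun i j =>
          (if i ≠ j ∧ max (σ i : ℕ) (σ j : ℕ) - min (σ i : ℕ) (σ j : ℕ) ≤ d
            then (1 : ℝ) else 0) * G i j)
      ≤ ((n.factorial : ℝ))⁻¹ * (α * ∑ σ : Equiv.Perm (Fin n), fB σ) :=
        mul_le_mul_of_nonneg_left hsum hinv
    _ = α * (((n.factorial : ℝ))⁻¹ * ∑ σ : Equiv.Perm (Fin n), fB σ) := by ring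
end
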